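/- arXiv:2106.09332 — 2 statements merged into one kernel-verified Lean document; each statement's English description precedes it below -/
import Mathlib

section
/- Let g be a derivator on [a,b] with a ∉ N_g⁻ and b ∉ C_g ∪ N_g⁺ ∪ D_g. Let h : [a,b] → 𝔽 be bounded and g-continuous and define H(x) = ∫_{[a,x)} h dμ_g. Then H is g-differentiable at every x ∈ [a,b] with H'_g(x) = h(x); in particular H ∈ BC¹_g([a,b]). -/
open MeasureTheory Set Function Filter Topology

noncomputable section

/-- A derivator: a non-decreasing, left-continuous function. -/
def IsDerivator (g : ℝ → ℝ) : Prop :=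
  Monotone g ∧ ∀ x : ℝ, ContinuousWithinAt g (Set.Iic x) x

/-- The jump `Δ⁺g(t) = g(t⁺) - g(t)`. -/
def jumpG (g : ℝ → ℝ) (t : ℝ) : ℝ := Function.rightLim g t - g t

/-- The set of discontinuity points of `g`. -/
def Dg (g : ℝ → ℝ) : Set ℝ := {t | 0 < jumpG g t}

/-- The jump part `g^B` of `g`, with base point `a`. -/
def jumpPart (g : ℝ → ℝ) (a : ℝ) : ℝ → ℝ := fun t =>
  if a < t then ∑' s : (Set.Ico a t : Set ℝ), jumpG g s
  else - ∑' s : (Set.Ico t a : Set ℝ), jumpG g s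

/-- The continuous part `g^C = g - g^B` of `g`, with base point `a`. -/
def contPart (g : ℝ → ℝ) (a : ℝ) : ℝ → ℝ := fun t => g t - jumpPart g a t

/-- The Lebesgue–Stieltjes outer measure associated to `g`, generated by
`μ_g([c,d)) = g d - g c` on half-open intervals. -/
def stieltjesOuter (g : ℝ → ℝ) : OuterMeasure ℝ :=
  OuterMeasure.ofFunction
    (fun s => ⨅ (p : ℝ × ℝ) (_ : s = Set.Ico p.1 p.2), ENNReal.ofReal (g p.2 - g p.1))
    (by
      refine le_antisymm ?_ (zero_le)
      refine le_trans (iInf₂_le ((0 : ℝ), (0 : ℝ)) ?_) ?_ <;> simp)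

open Classical in
/-- The Lebesgue–Stieltjes measure of a non-decreasing left-continuous `g`: the measure with
`μ_g([c,d)) = g d - g c`.  It is realised as the Stieltjes measure of the right-continuous
modification of `g`. -/
def stieltjesMeasure (g : ℝ → ℝ) : Measure ℝ :=
  if h : Monotone g then h.stieltjesFunction.measure else 0

variable {E : Type*} [NormedAddCommGroup E]

/-- `f` is `g`-continuous at `t` relative to the set `s`. -/
def GContWithin (g : ℝ → ℝ) (f : ℝ → E) (s : Set ℝ) (t : ℝ) : Prop :=
  ∀ ε > 0, ∃ δ > 0, ∀ u ∈ s, |g t - g u| < δ → ‖f t - f u‖ < ε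

/-- `f` is `g`-continuous on the set `s`. -/
def GContOn (g : ℝ → ℝ) (f : ℝ → E) (s : Set ℝ) : Prop := ∀ t ∈ s, GContWithin g f s t

/-- `t` lies in `C_g`: `g` is constant in a neighbourhood of `t`. -/
def InCg (g : ℝ → ℝ) (t : ℝ) : Prop :=
  ∃ ε > 0, ∀ u ∈ Set.Ioo (t - ε) (t + ε), ∀ v ∈ Set.Ioo (t - ε) (t + ε), g u = g v

/-- `t ∈ N_g⁻`: `t` is the left endpoint of a constancy interval of `g`, `t ∉ D_g`. -/
def InNgMinus (g : ℝ → ℝ) (t : ℝ) : Prop :=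
  t ∉ Dg g ∧ ¬ InCg g t ∧
    ∃ ε > 0, ∀ u ∈ Set.Ioo t (t + ε), ∀ v ∈ Set.Ioo t (t + ε), g u = g v

/-- `t ∈ N_g⁺`: `t` is the right endpoint of a constancy interval of `g`, `t ∉ D_g`. -/
def InNgPlus (g : ℝ → ℝ) (t : ℝ) : Prop :=
  t ∉ Dg g ∧ ¬ InCg g t ∧
    ∃ ε > 0, ∀ u ∈ Set.Ioo (t - ε) t, ∀ v ∈ Set.Ioo (t - ε) t, g u = g v

/-- The right endpoint `bₙ` of the constancy component of `g` containing `t`. -/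
def compEnd (g : ℝ → ℝ) (t : ℝ) : ℝ := sSup {u | ∀ v ∈ Set.Icc t u, g v = g t}

open Classical in
/-- The Stieltjes `g`-derivative of `f : s → E` at `t`, in the extended sense: at points of `D_g`
one takes the right-hand limit of the difference quotient, at points of `C_g` the right-hand
limit at the right endpoint of the constancy component, and elsewhere the limit of the difference
quotient restricted to points where `g` differs from `g t` (this covers the points of `N_g`). -/
def HasGDerivWithinAt [NormedSpace ℝ E] (g : ℝ → ℝ) (f : ℝ → E) (s : Set ℝ) (t : ℝ) (L : E) :
    Prop :=
  if t ∈ Dg g then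
    Tendsto (fun u => (g u - g t)⁻¹ • (f u - f t)) (𝓝[s ∩ Set.Ioi t] t) (𝓝 L)
  else if InCg g t then
    Tendsto (fun u => (g u - g (compEnd g t))⁻¹ • (f u - f (compEnd g t)))
      (𝓝[s ∩ Set.Ioi (compEnd g t)] (compEnd g t)) (𝓝 L)
  else
    Tendsto (fun u => (g u - g t)⁻¹ • (f u - f t)) (𝓝[s ∩ {u | g u ≠ g t}] t) (𝓝 L)

/-- `v` is `g`-absolutely continuous on `[0,T]`: it is an indefinite `μ_g`-integral. -/
def ACgOn (g : ℝ → ℝ) (v : ℝ → ℂ) (T : ℝ) : Prop :=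
  ∃ h : ℝ → ℂ, MeasureTheory.IntegrableOn h (Set.Ico 0 T) (stieltjesMeasure g) ∧
    ∀ t ∈ Set.Icc 0 T, v t = v 0 + ∫ s in Set.Ico 0 t, h s ∂(stieltjesMeasure g)

end
section Aux11
variable {g : ℝ → ℝ}
variable {g : ℝ → ℝ}

lemma IsDerivator.tendsto_left (hg : IsDerivator g) (x : ℝ) :
    Tendsto g (𝓝[<] x) (𝓝 (g x)) :=
  (hg.2 x).mono_left (nhdsWithin_mono _ Iio_subset_Iic_self)

lemma IsDerivator.leftLim_eq (hg : IsDerivator g) (x : ℝ) : leftLim g x = g x :=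
  leftLim_eq_of_tendsto (hg.tendsto_left x)

lemma IsDerivator.leftLim_sf (hg : IsDerivator g) (x : ℝ) :
    leftLim (hg.1.stieltjesFunction) x = g x := by
  have hcoe : ⇑(hg.1.stieltjesFunction) = rightLim g := funext (hg.1.stieltjesFunction_eq)
  rw [hcoe]
  refine leftLim_eq_of_tendsto ?_
  have h1 : ∀ᶠ s in 𝓝[<] x, g s ≤ rightLim g s :=
    Eventually.of_forall fun s => hg.1.le_rightLim le_rfl
  have h2 : ∀ᶠ s in 𝓝[<] x, rightLim g s ≤ g x := by
    filter_upwards [self_mem_nhdsWithin] with s (hs : s < x)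
    calc rightLim g s ≤ leftLim g x := hg.1.rightLim_le_leftLim hs
    _ = g x := hg.leftLim_eq x
  exact tendsto_of_tendsto_of_tendsto_of_le_of_le' (hg.tendsto_left x) tendsto_const_nhds h1 h2

lemma IsDerivator.sm_eq (hg : IsDerivator g) :
    stieltjesMeasure g = hg.1.stieltjesFunction.measure := by
  rw [stieltjesMeasure, dif_pos hg.1]

lemma IsDerivator.measure_Ico (hg : IsDerivator g) (c d : ℝ) :
    stieltjesMeasure g (Ico c d) = ENNReal.ofReal (g d - g c) := by
  rw [hg.sm_eq, StieltjesFunction.measure_Ico, hg.leftLim_sf, hg.leftLim_sf]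

lemma IsDerivator.measure_Ioo (hg : IsDerivator g) (c d : ℝ) :
    stieltjesMeasure g (Ioo c d) = ENNReal.ofReal (g d - rightLim g c) := by
  rw [hg.sm_eq, StieltjesFunction.measure_Ioo, hg.leftLim_sf, hg.1.stieltjesFunction_eq]

lemma IsDerivator.measure_singleton (hg : IsDerivator g) (c : ℝ) :
    stieltjesMeasure g {c} = ENNReal.ofReal (rightLim g c - g c) := by
  rw [hg.sm_eq, StieltjesFunction.measure_singleton, hg.leftLim_sf, hg.1.stieltjesFunction_eq]

lemma IsDerivator.measure_Ico_toReal (hg : IsDerivator g) {c d : ℝ} (hcd : c ≤ d) :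
    (stieltjesMeasure g (Ico c d)).toReal = g d - g c := by
  rw [hg.measure_Ico, ENNReal.toReal_ofReal (by linarith [hg.1 hcd])]

lemma IsDerivator.rightLim_eq_of_not_mem (hg : IsDerivator g) {x : ℝ} (hx : x ∉ Dg g) :
    rightLim g x = g x := by
  have h1 : g x ≤ rightLim g x := hg.1.le_rightLim le_rfl
  have h2 : ¬ (0 < rightLim g x - g x) := hx
  push_neg at h2
  linarith
section
variable {E : Type*} [NormedAddCommGroup E] {g : ℝ → ℝ}

lemma sm_indicator_finite {s : Set ℝ} (hs : s.Finite) (h : ℝ → E) :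
    StronglyMeasurable (Set.indicator s h) := by
  refine Set.Finite.induction_on (motive := fun s _ => StronglyMeasurable (Set.indicator s h)) s hs
    (by simpa [Set.indicator_empty] using stronglyMeasurable_const) ?_
  intro a s ha _ ih
  rw [Set.insert_eq, Set.indicator_union_of_disjoint (by simpa using ha)]
  have h1 : Set.indicator {a} h = Set.indicator {a} (fun _ => h a) :=
    Set.indicator_congr (by rintro x rfl; rfl)
  rw [h1]
  exact (stronglyMeasurable_const.indicator (measurableSet_singleton a)).add ih

lemma sm_indicator_countable {s : Set ℝ} (hs : s.Countable) (h : ℝ → E) :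
    StronglyMeasurable (Set.indicator s h) := by
  rcases s.eq_empty_or_nonempty with rfl | hne
  · simpa [Set.indicator_empty] using stronglyMeasurable_const
  obtain ⟨e, rfl⟩ := hs.exists_eq_range hne
  have key : ∀ x, Tendsto (fun n : ℕ => Set.indicator (e '' Set.Iio n) h x) atTop
      (𝓝 (Set.indicator (Set.range e) h x)) := by
    intro x
    by_cases hx : x ∈ Set.range e
    · obtain ⟨k, rfl⟩ := hx
      apply tendsto_atTop_of_eventually_const (i₀ := k + 1)
      intro n hn
      have hm : e k ∈ e '' Set.Iio n := ⟨k, Nat.lt_of_succ_le hn, rfl⟩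
      rw [Set.indicator_of_mem (Set.mem_range_self k) h, Set.indicator_of_mem hm h]
    · have h2 : ∀ n : ℕ, Set.indicator (e '' Set.Iio n) h x = 0 := fun n =>
        Set.indicator_of_notMem (fun hc => hx (Set.image_subset_range e _ hc)) h
      simp only [h2, Set.indicator_of_notMem hx]
      exact tendsto_const_nhds
  exact stronglyMeasurable_of_tendsto _
    (fun n => sm_indicator_finite ((Set.finite_Iio _).image e) h) (tendsto_pi_nhds.2 key)
end


section
variable {E : Type*} [NormedAddCommGroup E] {g : ℝ → ℝ} {h : ℝ → E} {a b : ℝ}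

lemma IsDerivator.countable_Dg (hg : IsDerivator g) : (Dg g).Countable := by
  refine hg.1.countable_not_continuousAt.mono ?_
  intro t ht hc
  have h1 : leftLim g t = rightLim g t := hg.1.continuousAt_iff_leftLim_eq_rightLim.1 hc
  have h2 : (0:ℝ) < rightLim g t - g t := ht
  rw [hg.leftLim_eq] at h1
  linarith

lemma IsDerivator.continuousAt_of_not_mem (hg : IsDerivator g) {t : ℝ} (ht : t ∉ Dg g) :
    ContinuousAt g t := by
  rw [hg.1.continuousAt_iff_leftLim_eq_rightLim, hg.leftLim_eq, hg.rightLim_eq_of_not_mem ht]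

lemma gcont_aesm (hg : IsDerivator g) (hgc : GContOn g h (Set.Icc a b)) :
    AEStronglyMeasurable h ((stieltjesMeasure g).restrict (Set.Ico a b)) := by
  set D : Set ℝ := Dg g ∩ Set.Ico a b with hD
  have hDc : D.Countable := hg.countable_Dg.mono inter_subset_left
  have hDm : MeasurableSet D := hDc.measurableSet
  have hsplit : Set.Ico a b = (Set.Ico a b \ D) ∪ D := by
    rw [Set.diff_union_self, Set.union_eq_self_of_subset_right inter_subset_right]
  rw [hsplit]
  refine AEStronglyMeasurable.mono_measure ?_ (Measure.restrict_union_le _ _)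
  rw [aestronglyMeasurable_add_measure_iff]
  constructor
  · -- continuous part
    refine ContinuousOn.aestronglyMeasurable ?_ (measurableSet_Ico.diff hDm)
    intro t ht
    have htab : t ∈ Set.Icc a b := ⟨ht.1.1, ht.1.2.le⟩
    have htD : t ∉ Dg g := fun hc => ht.2 ⟨hc, ht.1⟩
    have hga : ContinuousAt g t := hg.continuousAt_of_not_mem htD
    rw [Metric.continuousWithinAt_iff]
    intro ε hε
    obtain ⟨δ, hδ, hδ'⟩ := hgc t htab ε hε
    obtain ⟨δ₂, hδ₂, hδ₂'⟩ := Metric.continuousAt_iff.1 hga δ hδ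
    refine ⟨δ₂, hδ₂, fun u hu hud => ?_⟩
    have h1 : |g t - g u| < δ := by
      have := hδ₂' hud
      rw [Real.dist_eq] at this
      rw [abs_sub_comm]; exact this
    have h2 := hδ' u ⟨hu.1.1, hu.1.2.le⟩ h1
    rw [dist_eq_norm, norm_sub_rev]; exact h2
  · -- countable part
    refine ⟨Set.indicator D h, sm_indicator_countable hDc h, ?_⟩
    refine (ae_restrict_iff' hDm).2 (Eventually.of_forall fun x hx => ?_)
    rw [Set.indicator_of_mem hx]

lemma gcont_integrableOn (hg : IsDerivator g) (hgc : GContOn g h (Set.Icc a b))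
    {M : ℝ} (hM : ∀ x ∈ Set.Icc a b, ‖h x‖ ≤ M) :
    IntegrableOn h (Set.Ico a b) (stieltjesMeasure g) := by
  have hfin : stieltjesMeasure g (Set.Ico a b) < ⊤ := by
    rw [hg.measure_Ico]; exact ENNReal.ofReal_lt_top
  refine Integrable.mono' (g := fun _ => M) ?_ (gcont_aesm hg hgc) ?_
  · exact integrableOn_const hfin.ne
  · refine (ae_restrict_iff' measurableSet_Ico).2 (Eventually.of_forall fun x hx => ?_)
    exact hM x ⟨hx.1, hx.2.le⟩

lemma Hdiff [NormedSpace ℝ E] [CompleteSpace E] (hg : IsDerivator g)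
    (hInt : IntegrableOn h (Set.Ico a b) (stieltjesMeasure g)) {c d : ℝ}
    (hac : a ≤ c) (hcd : c ≤ d) (hdb : d ≤ b) :
    (∫ s in Set.Ico a d, h s ∂(stieltjesMeasure g)) - ∫ s in Set.Ico a c, h s ∂(stieltjesMeasure g)
      = ∫ s in Set.Ico c d, h s ∂(stieltjesMeasure g) := by
  rw [← Set.Ico_union_Ico_eq_Ico hac hcd (c := d)]
  · rw [setIntegral_union (Set.Ico_disjoint_Ico_same) measurableSet_Ico
      (hInt.mono_set (Set.Ico_subset_Ico le_rfl (hcd.trans hdb)))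
      (hInt.mono_set (Set.Ico_subset_Ico hac hdb))]
    abel
end

section
variable {E : Type*} [NormedAddCommGroup E] [NormedSpace ℝ E] [CompleteSpace E]
  {g : ℝ → ℝ} {h : ℝ → E} {a b : ℝ}

lemma keyR (hg : IsDerivator g) (hgc : GContOn g h (Set.Icc a b))
    {M : ℝ} (hM : ∀ x ∈ Set.Icc a b, ‖h x‖ ≤ M) {x : ℝ} (hx : x ∈ Set.Icc a b) :
    Tendsto (fun u => (g u - g x)⁻¹ •
        ((∫ s in Set.Ico a u, h s ∂(stieltjesMeasure g))
          - ∫ s in Set.Ico a x, h s ∂(stieltjesMeasure g)))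
      (𝓝[Set.Icc a b ∩ Set.Ioi x ∩ {u | g x < g u}] x) (𝓝 (h x)) := by
  set μ := stieltjesMeasure g with hμ
  have hInt : IntegrableOn h (Set.Ico a b) μ := gcont_integrableOn hg hgc hM
  set l := 𝓝[Set.Icc a b ∩ Set.Ioi x ∩ {u | g x < g u}] x with hl
  have hlle : l ≤ 𝓝[>] x := nhdsWithin_mono _ (fun u hu => hu.1.2)
  have hM0 : 0 ≤ M := (norm_nonneg _).trans (hM x hx)
  have hcomp : ∀ u, u ≤ b → x < u →
      ((∫ s in Set.Ico a u, h s ∂μ) - ∫ s in Set.Ico a x, h s ∂μ)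
        = ∫ s in Set.Ico x u, h s ∂μ := by
    intro u hu2 hu3
    have := Hdiff hg hInt hx.1 hu3.le hu2
    rwa [← hμ] at this
  by_cases hxD : x ∈ Dg g
  · -- jump point
    have hΔ : (0:ℝ) < rightLim g x - g x := hxD
    have hgt : Tendsto (fun u => g u - rightLim g x) l (𝓝 0) := by
      have := (hg.1.tendsto_rightLim x).mono_left hlle
      simpa using this.sub_const (rightLim g x)
    rw [tendsto_iff_norm_sub_tendsto_zero]
    refine squeeze_zero' (Eventually.of_forall fun _ => norm_nonneg _) ?_
      (by simpa using hgt.const_mul ((rightLim g x - g x)⁻¹ * (2*M)))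
    filter_upwards [self_mem_nhdsWithin] with u hu
    obtain ⟨⟨⟨hu1, hu2⟩, hu3'⟩, hu4'⟩ := hu
    have hu3 : x < u := hu3'
    have hu4 : g x < g u := hu4'
    have hrlu : rightLim g x ≤ g u := hg.1.rightLim_le hu3
    set p := g u - g x with hp
    have hp0 : 0 < p := sub_pos.2 hu4
    have hpΔ : rightLim g x - g x ≤ p := by rw [hp]; linarith
    have hIcoeq : Set.Ico x u = {x} ∪ Set.Ioo x u := by
      rw [← Set.Ioo_insert_left hu3, Set.insert_eq]
    have hsub1 : Set.Ioo x u ⊆ Set.Ico a b :=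
      fun s hs => ⟨hx.1.trans hs.1.le, hs.2.trans_le hu2⟩
    have hsub2 : ({x} : Set ℝ) ⊆ Set.Ico a b := by
      simp only [Set.singleton_subset_iff]
      exact ⟨hx.1, lt_of_lt_of_le hu3 hu2⟩
    have hsplit : (∫ s in Set.Ico x u, h s ∂μ)
        = (∫ s in ({x} : Set ℝ), h s ∂μ) + ∫ s in Set.Ioo x u, h s ∂μ := by
      rw [hIcoeq, setIntegral_union (by simp) measurableSet_Ioo
        (hInt.mono_set hsub2) (hInt.mono_set hsub1)]
    have hsing : (∫ s in ({x} : Set ℝ), h s ∂μ) = (rightLim g x - g x) • h x := by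
      rw [Measure.restrict_singleton, integral_smul_measure, integral_dirac,
        hμ, hg.measure_singleton, ENNReal.toReal_ofReal hΔ.le]
    have hIoo : ‖∫ s in Set.Ioo x u, h s ∂μ‖ ≤ M * (g u - rightLim g x) := by
      have hfin : μ (Set.Ioo x u) < ⊤ := by rw [hμ, hg.measure_Ioo]; exact ENNReal.ofReal_lt_top
      have hbound : ∀ s ∈ Set.Ioo x u, ‖h s‖ ≤ M := fun s hs =>
        hM s ⟨hx.1.trans hs.1.le, (hs.2.trans_le hu2).le⟩
      have hmeas : AEStronglyMeasurable h (μ.restrict (Set.Ioo x u)) :=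
        (gcont_aesm hg hgc).mono_measure (Measure.restrict_mono hsub1 le_rfl)
      have := norm_setIntegral_le_of_norm_le_const hfin hbound
      rwa [hμ, measureReal_def, hg.measure_Ioo, ENNReal.toReal_ofReal (by linarith)] at this
    rw [hcomp u hu2 hu3, hsplit, hsing]
    have halg : p⁻¹ • ((rightLim g x - g x) • h x + ∫ s in Set.Ioo x u, h s ∂μ) - h x
        = (p⁻¹ * (rightLim g x - g x) - 1) • h x + p⁻¹ • ∫ s in Set.Ioo x u, h s ∂μ := by
      rw [smul_add, smul_smul, sub_smul, one_smul]
      abel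
    rw [halg]
    have hq : |p⁻¹ * (rightLim g x - g x) - 1| = p⁻¹ * (g u - rightLim g x) := by
      have h1 : g u - rightLim g x = p - (rightLim g x - g x) := by rw [hp]; ring
      have h2 : p⁻¹ * (rightLim g x - g x) ≤ 1 := by
        have := mul_le_mul_of_nonneg_left hpΔ (inv_nonneg.2 hp0.le)
        rwa [inv_mul_cancel₀ hp0.ne'] at this
      have h3 : p⁻¹ * (p - (rightLim g x - g x)) = 1 - p⁻¹ * (rightLim g x - g x) := by
        rw [mul_sub, inv_mul_cancel₀ hp0.ne']
      rw [abs_of_nonpos (by linarith), h1, h3]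
      ring
    have hnn : (0:ℝ) ≤ g u - rightLim g x := by linarith
    have e1 : |p⁻¹ * (rightLim g x - g x) - 1| * ‖h x‖ ≤ p⁻¹ * (g u - rightLim g x) * M := by
      rw [hq]
      exact mul_le_mul_of_nonneg_left (hM x hx)
        (mul_nonneg (inv_nonneg.2 hp0.le) hnn)
    have e2 : p⁻¹ * ‖∫ s in Set.Ioo x u, h s ∂μ‖ ≤ p⁻¹ * (M * (g u - rightLim g x)) :=
      mul_le_mul_of_nonneg_left hIoo (inv_nonneg.2 hp0.le)
    have e3 : p⁻¹ * (2 * M * (g u - rightLim g x))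
        ≤ (rightLim g x - g x)⁻¹ * (2 * M * (g u - rightLim g x)) :=
      mul_le_mul_of_nonneg_right (inv_anti₀ hΔ hpΔ) (by positivity)
    calc ‖(p⁻¹ * (rightLim g x - g x) - 1) • h x + p⁻¹ • ∫ s in Set.Ioo x u, h s ∂μ‖
        ≤ ‖(p⁻¹ * (rightLim g x - g x) - 1) • h x‖ + ‖p⁻¹ • ∫ s in Set.Ioo x u, h s ∂μ‖ :=
          norm_add_le _ _
      _ = |p⁻¹ * (rightLim g x - g x) - 1| * ‖h x‖
          + p⁻¹ * ‖∫ s in Set.Ioo x u, h s ∂μ‖ := by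
          rw [norm_smul, norm_smul, Real.norm_eq_abs, Real.norm_eq_abs,
            abs_of_nonneg (inv_nonneg.2 hp0.le)]
      _ ≤ p⁻¹ * (g u - rightLim g x) * M + p⁻¹ * (M * (g u - rightLim g x)) := by
          exact add_le_add e1 e2
      _ = p⁻¹ * (2 * M * (g u - rightLim g x)) := by ring
      _ ≤ (rightLim g x - g x)⁻¹ * (2 * M * (g u - rightLim g x)) := e3
      _ = (rightLim g x - g x)⁻¹ * (2 * M) * (g u - rightLim g x) := by ring
  · -- continuity point (from the right)
    have hrl : rightLim g x = g x := hg.rightLim_eq_of_not_mem hxD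
    have hgt : Tendsto g l (𝓝 (g x)) := by
      have := (hg.1.tendsto_rightLim x).mono_left hlle
      rwa [hrl] at this
    rw [Metric.tendsto_nhds]
    intro ε hε
    obtain ⟨δ, hδ, hδ'⟩ := hgc x hx (ε/2) (half_pos hε)
    have hev : ∀ᶠ u in l, dist (g u) (g x) < δ := hgt (Metric.ball_mem_nhds _ hδ)
    filter_upwards [hev, self_mem_nhdsWithin] with u huδ hu
    obtain ⟨⟨⟨hu1, hu2⟩, hu3'⟩, hu4'⟩ := hu
    have hu3 : x < u := hu3'
    have hu4 : g x < g u := hu4'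
    set p := g u - g x with hp
    have hp0 : 0 < p := sub_pos.2 hu4
    have hpδ : p < δ := by
      rw [Real.dist_eq] at huδ
      calc p ≤ |g u - g x| := le_abs_self _
        _ < δ := huδ
    have hsub : Set.Ico x u ⊆ Set.Ico a b := Set.Ico_subset_Ico hx.1 hu2
    have hIxu : IntegrableOn h (Set.Ico x u) μ := hInt.mono_set hsub
    have hIc : IntegrableOn (fun _ => h x) (Set.Ico x u) μ := by
      refine integrableOn_const (lt_top_iff_ne_top.1 ?_)
      rw [hμ, hg.measure_Ico]; exact ENNReal.ofReal_lt_top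
    have hconst : (∫ _ in Set.Ico x u, h x ∂μ) = p • h x := by
      rw [setIntegral_const, hμ, measureReal_def, hg.measure_Ico_toReal hu3.le]
    have hkey : (g u - g x)⁻¹ •
        ((∫ s in Set.Ico a u, h s ∂μ) - ∫ s in Set.Ico a x, h s ∂μ) - h x
        = p⁻¹ • ∫ s in Set.Ico x u, (h s - h x) ∂μ := by
      rw [hcomp u hu2 hu3, integral_sub hIxu hIc, hconst, ← hp, smul_sub, smul_smul,
        inv_mul_cancel₀ hp0.ne', one_smul]
    have hbnd : ‖∫ s in Set.Ico x u, (h s - h x) ∂μ‖ ≤ (ε/2) * p := by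
      have hfin : μ (Set.Ico x u) < ⊤ := by rw [hμ, hg.measure_Ico]; exact ENNReal.ofReal_lt_top
      have hbound : ∀ s ∈ Set.Ico x u, ‖h s - h x‖ ≤ ε/2 := by
        intro s hs
        have hgs1 : g x ≤ g s := hg.1 hs.1
        have hgs2 : g s ≤ g u := hg.1 hs.2.le
        have habs : |g x - g s| < δ := by
          rw [abs_sub_comm, abs_of_nonneg (by linarith)]
          linarith
        have := hδ' s ((hsub.trans Set.Ico_subset_Icc_self) hs) habs
        rw [norm_sub_rev]
        exact this.le
      have hmeas : AEStronglyMeasurable (fun s => h s - h x) (μ.restrict (Set.Ico x u)) :=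
        ((gcont_aesm hg hgc).mono_measure (Measure.restrict_mono hsub le_rfl)).sub
          aestronglyMeasurable_const
      have := norm_setIntegral_le_of_norm_le_const hfin hbound
      rwa [hμ, measureReal_def, hg.measure_Ico_toReal hu3.le] at this
    rw [dist_eq_norm, hkey, norm_smul, Real.norm_eq_abs, abs_of_nonneg (inv_nonneg.2 hp0.le)]
    calc p⁻¹ * ‖∫ s in Set.Ico x u, (h s - h x) ∂μ‖ ≤ p⁻¹ * ((ε/2) * p) := by gcongr
      _ = ε/2 := by field_simp
      _ < ε := half_lt_self hε

lemma keyL (hg : IsDerivator g) (hgc : GContOn g h (Set.Icc a b))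
    {M : ℝ} (hM : ∀ x ∈ Set.Icc a b, ‖h x‖ ≤ M) {x : ℝ} (hx : x ∈ Set.Icc a b) :
    Tendsto (fun u => (g u - g x)⁻¹ •
        ((∫ s in Set.Ico a u, h s ∂(stieltjesMeasure g))
          - ∫ s in Set.Ico a x, h s ∂(stieltjesMeasure g)))
      (𝓝[Set.Icc a b ∩ Set.Iio x ∩ {u | g u < g x}] x) (𝓝 (h x)) := by
  set μ := stieltjesMeasure g with hμ
  have hInt : IntegrableOn h (Set.Ico a b) μ := gcont_integrableOn hg hgc hM
  set l := 𝓝[Set.Icc a b ∩ Set.Iio x ∩ {u | g u < g x}] x with hl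
  have hlle : l ≤ 𝓝[<] x := nhdsWithin_mono _ (fun u hu => hu.1.2)
  have hcomp : ∀ u, a ≤ u → u < x →
      ((∫ s in Set.Ico a x, h s ∂μ) - ∫ s in Set.Ico a u, h s ∂μ)
        = ∫ s in Set.Ico u x, h s ∂μ := by
    intro u hu1 hu3
    have := Hdiff hg hInt hu1 hu3.le hx.2
    rwa [← hμ] at this
  have hgt : Tendsto g l (𝓝 (g x)) := (hg.tendsto_left x).mono_left hlle
  rw [Metric.tendsto_nhds]
  intro ε hε
  obtain ⟨δ, hδ, hδ'⟩ := hgc x hx (ε/2) (half_pos hε)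
  have hev : ∀ᶠ u in l, dist (g u) (g x) < δ := hgt (Metric.ball_mem_nhds _ hδ)
  filter_upwards [hev, self_mem_nhdsWithin] with u huδ hu
  obtain ⟨⟨⟨hu1, hu2⟩, hu3'⟩, hu4'⟩ := hu
  have hu3 : u < x := hu3'
  have hu4 : g u < g x := hu4'
  set p := g x - g u with hp
  have hp0 : 0 < p := sub_pos.2 hu4
  have hpδ : p < δ := by
    rw [Real.dist_eq, abs_sub_comm] at huδ
    calc p ≤ |g x - g u| := le_abs_self _
      _ < δ := huδ
  have hsub : Set.Ico u x ⊆ Set.Ico a b := Set.Ico_subset_Ico hu1 hx.2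
  have hIxu : IntegrableOn h (Set.Ico u x) μ := hInt.mono_set hsub
  have hIc : IntegrableOn (fun _ => h x) (Set.Ico u x) μ := by
    refine integrableOn_const (lt_top_iff_ne_top.1 ?_)
    rw [hμ, hg.measure_Ico]; exact ENNReal.ofReal_lt_top
  have hconst : (∫ _ in Set.Ico u x, h x ∂μ) = p • h x := by
    rw [setIntegral_const, hμ, measureReal_def, hg.measure_Ico_toReal hu3.le]
  have hswap : (g u - g x)⁻¹ •
      ((∫ s in Set.Ico a u, h s ∂μ) - ∫ s in Set.Ico a x, h s ∂μ)
      = p⁻¹ • ((∫ s in Set.Ico a x, h s ∂μ) - ∫ s in Set.Ico a u, h s ∂μ) := by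
    have hgu : g u - g x = -p := by rw [hp]; ring
    rw [hgu, inv_neg, neg_smul, ← smul_neg, neg_sub]
  have hkey : (g u - g x)⁻¹ •
      ((∫ s in Set.Ico a u, h s ∂μ) - ∫ s in Set.Ico a x, h s ∂μ) - h x
      = p⁻¹ • ∫ s in Set.Ico u x, (h s - h x) ∂μ := by
    rw [hswap, hcomp u hu1 hu3, integral_sub hIxu hIc, hconst, smul_sub, smul_smul,
      inv_mul_cancel₀ hp0.ne', one_smul]
  have hbnd : ‖∫ s in Set.Ico u x, (h s - h x) ∂μ‖ ≤ (ε/2) * p := by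
    have hfin : μ (Set.Ico u x) < ⊤ := by rw [hμ, hg.measure_Ico]; exact ENNReal.ofReal_lt_top
    have hbound : ∀ s ∈ Set.Ico u x, ‖h s - h x‖ ≤ ε/2 := by
      intro s hs
      have hgs1 : g u ≤ g s := hg.1 hs.1
      have hgs2 : g s ≤ g x := hg.1 hs.2.le
      have habs : |g x - g s| < δ := by
        rw [abs_of_nonneg (by linarith)]
        rw [hp] at hpδ
        linarith
      have := hδ' s ((hsub.trans Set.Ico_subset_Icc_self) hs) habs
      rw [norm_sub_rev]
      exact this.le
    have hmeas : AEStronglyMeasurable (fun s => h s - h x) (μ.restrict (Set.Ico u x)) :=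
      ((gcont_aesm hg hgc).mono_measure (Measure.restrict_mono hsub le_rfl)).sub
        aestronglyMeasurable_const
    have := norm_setIntegral_le_of_norm_le_const hfin hbound
    rwa [hμ, measureReal_def, hg.measure_Ico_toReal hu3.le] at this
  rw [dist_eq_norm, hkey, norm_smul, Real.norm_eq_abs, abs_of_nonneg (inv_nonneg.2 hp0.le)]
  calc p⁻¹ * ‖∫ s in Set.Ico u x, (h s - h x) ∂μ‖ ≤ p⁻¹ * ((ε/2) * p) := by gcongr
    _ = ε/2 := by field_simp
    _ < ε := half_lt_self hε
end


section
variable {g : ℝ → ℝ} {a b : ℝ}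

lemma compEnd_facts (hg : IsDerivator g) (hb1 : ¬ InCg g b) (hb2 : ¬ InNgPlus g b)
    (hb3 : b ∉ Dg g) {x : ℝ} (hx : x ∈ Set.Icc a b) (hxC : InCg g x) :
    x < compEnd g x ∧ compEnd g x < b ∧ g (compEnd g x) = g x ∧
      ∀ u, compEnd g x < u → g (compEnd g x) < g u := by
  set S : Set ℝ := {u | ∀ v ∈ Set.Icc x u, g v = g x} with hS
  have hxS : x ∈ S := by
    intro v hv
    have : v = x := le_antisymm hv.2 hv.1
    rw [this]
  have hxb : x < b := by
    rcases lt_or_eq_of_le hx.2 with h | h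
    · exact h
    · exact absurd (h ▸ hxC) hb1
  have hSbdd : BddAbove S := by
    by_contra hc
    rw [not_bddAbove_iff] at hc
    have hcon : ∀ v, x < v → g v = g x := by
      intro v hv
      obtain ⟨w, hwS, hvw⟩ := hc v
      exact hwS v ⟨hv.le, hvw.le⟩
    refine hb1 ⟨b - x, by linarith, fun u hu v hv => ?_⟩
    rw [hcon u (by simpa using hu.1), hcon v (by simpa using hv.1)]
  obtain ⟨ε, hε, hconst⟩ := hxC
  have hxt : x < compEnd g x := by
    have hmem : x + ε/2 ∈ S := by
      intro v hv
      refine hconst v ⟨by linarith [hv.1], by linarith [hv.2]⟩ x ⟨by linarith, by linarith⟩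
    calc x < x + ε/2 := by linarith
      _ ≤ compEnd g x := le_csSup hSbdd hmem
  have hconst' : ∀ v, x ≤ v → v < compEnd g x → g v = g x := by
    intro v hv1 hv2
    obtain ⟨w, hwS, hvw⟩ := exists_lt_of_lt_csSup ⟨x, hxS⟩ hv2
    exact hwS v ⟨hv1, hvw.le⟩
  have hgt' : g (compEnd g x) = g x := by
    have h1 : Tendsto g (𝓝[<] (compEnd g x)) (𝓝 (g x)) := by
      refine Tendsto.congr' ?_ tendsto_const_nhds
      filter_upwards [Ioo_mem_nhdsLT_of_mem ⟨hxt, le_rfl⟩] with v hv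
      exact (hconst' v hv.1.le hv.2).symm
    exact tendsto_nhds_unique (hg.tendsto_left (compEnd g x)) h1
  have htb : compEnd g x < b := by
    by_contra hc
    push_neg at hc
    rcases eq_or_lt_of_le hc with h | h
    · -- b = compEnd g x : b ∈ N_g⁺
      refine hb2 ⟨hb3, hb1, b - x, by linarith, fun u hu v hv => ?_⟩
      rw [hconst' u (by linarith [hu.1]) (by rw [← h]; exact hu.2),
        hconst' v (by linarith [hv.1]) (by rw [← h]; exact hv.2)]
    · -- b < compEnd g x : b ∈ C_g
      refine hb1 ⟨min (b - x) (compEnd g x - b), lt_min (by linarith) (by linarith),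
        fun u hu v hv => ?_⟩
      have hu1 : x < u := by
        have := hu.1; have h2 : min (b - x) (compEnd g x - b) ≤ b - x := min_le_left _ _
        linarith
      have hu2 : u < compEnd g x := by
        have := hu.2; have h2 : min (b - x) (compEnd g x - b) ≤ compEnd g x - b := min_le_right _ _
        linarith
      have hv1 : x < v := by
        have := hv.1; have h2 : min (b - x) (compEnd g x - b) ≤ b - x := min_le_left _ _
        linarith
      have hv2 : v < compEnd g x := by
        have := hv.2; have h2 : min (b - x) (compEnd g x - b) ≤ compEnd g x - b := min_le_right _ _
        linarith
      rw [hconst' u hu1.le hu2, hconst' v hv1.le hv2]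
  refine ⟨hxt, htb, hgt', fun u hu => ?_⟩
  have huS : u ∉ S := fun hc => absurd (le_csSup hSbdd hc) (not_le.2 hu)
  have huS' : ¬ ∀ v ∈ Set.Icc x u, g v = g x := huS
  push_neg at huS'
  obtain ⟨v, hv, hne⟩ := huS'
  have h1 : g x < g v := lt_of_le_of_ne (hg.1 hv.1) (Ne.symm hne)
  have h2 : g v ≤ g u := hg.1 hv.2
  rw [hgt']
  linarith
end


section
variable {E : Type*} [NormedAddCommGroup E] [NormedSpace ℝ E] [CompleteSpace E]
  {g : ℝ → ℝ} {h : ℝ → E} {a b : ℝ}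

lemma normIco (hg : IsDerivator g) (hgc : GContOn g h (Set.Icc a b))
    {M : ℝ} (hM : ∀ x ∈ Set.Icc a b, ‖h x‖ ≤ M) {c d : ℝ}
    (hac : a ≤ c) (hcd : c ≤ d) (hdb : d ≤ b) :
    ‖∫ s in Set.Ico c d, h s ∂(stieltjesMeasure g)‖ ≤ M * (g d - g c) := by
  have hfin : stieltjesMeasure g (Set.Ico c d) < ⊤ := by
    rw [hg.measure_Ico]; exact ENNReal.ofReal_lt_top
  have hbound : ∀ s ∈ Set.Ico c d, ‖h s‖ ≤ M := fun s hs =>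
    hM s ⟨hac.trans hs.1, hs.2.le.trans hdb⟩
  have hmeas : AEStronglyMeasurable h ((stieltjesMeasure g).restrict (Set.Ico c d)) :=
    (gcont_aesm hg hgc).mono_measure
      (Measure.restrict_mono (Set.Ico_subset_Ico hac hdb) le_rfl)
  have := norm_setIntegral_le_of_norm_le_const hfin hbound
  rwa [measureReal_def, hg.measure_Ico_toReal hcd] at this
end
end Aux11

/-- the indefinite `μ_g`-integral `H(x) = ∫_{[a,x)} h dμ_g` of a bounded
`g`-continuous function `h` is `g`-differentiable at every point of `[a,b]` with `H'_g = h`;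
in particular `H ∈ BC¹_g([a,b])`. -/
theorem stmt11 {E : Type*} [NormedAddCommGroup E] [NormedSpace ℝ E] [CompleteSpace E]
    (g : ℝ → ℝ) (hg : IsDerivator g) (a b : ℝ) (hab : a ≤ b)
    (ha : ¬ InNgMinus g a) (hb1 : ¬ InCg g b) (hb2 : ¬ InNgPlus g b) (hb3 : b ∉ Dg g)
    (h : ℝ → E) (hgc : GContOn g h (Set.Icc a b))
    (hbd : ∃ M, ∀ x ∈ Set.Icc a b, ‖h x‖ ≤ M) :
    (∀ x ∈ Set.Icc a b,
      HasGDerivWithinAt g (fun y => ∫ s in Set.Ico a y, h s ∂(stieltjesMeasure g))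
        (Set.Icc a b) x (h x)) ∧
    GContOn g (fun y => ∫ s in Set.Ico a y, h s ∂(stieltjesMeasure g)) (Set.Icc a b) ∧
    ∃ M, ∀ x ∈ Set.Icc a b, ‖∫ s in Set.Ico a x, h s ∂(stieltjesMeasure g)‖ ≤ M := by
  classical
  obtain ⟨M, hM⟩ := hbd
  have hM0 : 0 ≤ M := (norm_nonneg _).trans (hM a ⟨le_rfl, hab⟩)
  have hInt : IntegrableOn h (Set.Ico a b) (stieltjesMeasure g) := gcont_integrableOn hg hgc hM
  refine ⟨?_, ?_, ?_⟩
  · intro x hx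
    unfold HasGDerivWithinAt
    split_ifs with hxD hxC
    · -- x ∈ D_g
      have hset : Set.Icc a b ∩ Set.Ioi x = Set.Icc a b ∩ Set.Ioi x ∩ {u | g x < g u} := by
        ext u
        constructor
        · rintro ⟨h1, h2⟩
          refine ⟨⟨h1, h2⟩, ?_⟩
          have hΔ : (0:ℝ) < rightLim g x - g x := hxD
          have := hg.1.rightLim_le (show x < u from h2)
          show g x < g u
          linarith
        · rintro ⟨h1, _⟩; exact h1
      rw [hset]
      exact keyR hg hgc hM hx
    · -- x ∈ C_g
      obtain ⟨hxt, htb, hgt', hstrict⟩ := compEnd_facts hg hb1 hb2 hb3 hx hxC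
      have ht'ab : compEnd g x ∈ Set.Icc a b := ⟨hx.1.trans hxt.le, htb.le⟩
      have hhx : h x = h (compEnd g x) := by
        by_contra hne
        obtain ⟨δ, hδ, hδ'⟩ := hgc x hx ‖h x - h (compEnd g x)‖
          (norm_sub_pos_iff.2 hne)
        have := hδ' (compEnd g x) ht'ab (by rw [hgt', sub_self, abs_zero]; exact hδ)
        exact lt_irrefl _ this
      rw [hhx]
      have hset : Set.Icc a b ∩ Set.Ioi (compEnd g x)
          = Set.Icc a b ∩ Set.Ioi (compEnd g x) ∩ {u | g (compEnd g x) < g u} := by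
        ext u
        constructor
        · rintro ⟨h1, h2⟩; exact ⟨⟨h1, h2⟩, hstrict u h2⟩
        · rintro ⟨h1, _⟩; exact h1
      rw [hset]
      exact keyR hg hgc hM ht'ab
    · -- generic point
      have hset : Set.Icc a b ∩ {u | g u ≠ g x}
          = (Set.Icc a b ∩ Set.Ioi x ∩ {u | g x < g u})
            ∪ (Set.Icc a b ∩ Set.Iio x ∩ {u | g u < g x}) := by
        ext u
        constructor
        · rintro ⟨hu, hne⟩
          have hne : g u ≠ g x := hne
          rcases lt_trichotomy u x with hlt | heq | hgt2
          · exact Or.inr ⟨⟨hu, hlt⟩, lt_of_le_of_ne (hg.1 hlt.le) hne⟩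
          · exact absurd (by rw [heq]) hne
          · exact Or.inl ⟨⟨hu, hgt2⟩, lt_of_le_of_ne (hg.1 hgt2.le) (Ne.symm hne)⟩
        · rintro (⟨⟨hu, _⟩, hlt⟩ | ⟨⟨hu, _⟩, hlt⟩)
          · exact ⟨hu, ne_of_gt hlt⟩
          · exact ⟨hu, ne_of_lt hlt⟩
      rw [hset, nhdsWithin_union, tendsto_sup]
      exact ⟨keyR hg hgc hM hx, keyL hg hgc hM hx⟩
  · -- g-continuity of the primitive
    intro t ht ε hε
    refine ⟨ε/(M+1), by positivity, fun u hu hgu => ?_⟩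
    have key : ∀ c d, a ≤ c → c ≤ d → d ≤ b → g d - g c < ε/(M+1) →
        ‖∫ s in Set.Ico c d, h s ∂(stieltjesMeasure g)‖ < ε := by
      intro c d h1 h2 h3 h4
      have hnm := normIco hg hgc hM h1 h2 h3
      have h5 : M * (g d - g c) ≤ M * (ε/(M+1)) := mul_le_mul_of_nonneg_left h4.le hM0
      have hq : (M+1) * (ε/(M+1)) = ε := mul_div_cancel₀ ε (by linarith)
      have hqpos : 0 < ε/(M+1) := by positivity
      nlinarith
    rcases le_total u t with hut | htu
    · have hd := Hdiff hg hInt hu.1 hut ht.2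
      show ‖(∫ s in Set.Ico a t, h s ∂(stieltjesMeasure g))
          - ∫ s in Set.Ico a u, h s ∂(stieltjesMeasure g)‖ < ε
      rw [hd]
      refine key u t hu.1 hut ht.2 ?_
      calc g t - g u ≤ |g t - g u| := le_abs_self _
        _ < ε/(M+1) := hgu
    · have hd := Hdiff hg hInt ht.1 htu hu.2
      show ‖(∫ s in Set.Ico a t, h s ∂(stieltjesMeasure g))
          - ∫ s in Set.Ico a u, h s ∂(stieltjesMeasure g)‖ < ε
      rw [norm_sub_rev, hd]
      refine key t u ht.1 htu hu.2 ?_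
      calc g u - g t ≤ |g u - g t| := le_abs_self _
        _ = |g t - g u| := abs_sub_comm _ _
        _ < ε/(M+1) := hgu
  · -- boundedness
    refine ⟨M * (g b - g a), fun x hx => ?_⟩
    have h1 := normIco hg hgc hM le_rfl hx.1 hx.2
    have h2 : M * (g x - g a) ≤ M * (g b - g a) :=
      mul_le_mul_of_nonneg_left (by linarith [hg.1 hx.2]) hM0
    exact h1.trans h2
end

section
/- Let β ∈ L¹_g([0,T); ℂ). The set A = {s ∈ [0,T) ∩ D_g : |1 + β(s)Δ⁺g(s)| < 1/2} is finite. Consequently, for any f ∈ L¹_g([0,T); ℂ), if additionally 1 + β(s)Δ⁺g(s) ≠ 0 for all s ∈ [0,T) ∩ D_g, then ∑_{s ∈ [0,T) ∩ D_g} |f(s)|Δ⁺g(s)/|1 + β(s)Δ⁺g(s)| < ∞. -/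
open MeasureTheory Set Function Filter Topology

lemma aux_leftLim_rightLim {g : ℝ → ℝ} (hg : IsDerivator g) (a : ℝ) :
    Function.leftLim (Function.rightLim g) a = g a := by
  obtain ⟨hm, hlc⟩ := hg
  apply leftLim_eq_of_tendsto
  have hgl : Tendsto g (𝓝[<] a) (𝓝 (g a)) :=
    (hlc a).mono Iio_subset_Iic_self
  refine tendsto_of_tendsto_of_tendsto_of_le_of_le' hgl tendsto_const_nhds ?_ ?_
  · filter_upwards [self_mem_nhdsWithin] with u _
    exact hm.le_rightLim le_rfl
  · filter_upwards [self_mem_nhdsWithin] with u hu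
    exact hm.rightLim_le hu

lemma aux_measure_singleton {g : ℝ → ℝ} (hg : IsDerivator g) (a : ℝ) :
    stieltjesMeasure g {a} = ENNReal.ofReal (jumpG g a) := by
  have hm := hg.1
  rw [stieltjesMeasure, dif_pos hm, StieltjesFunction.measure_singleton]
  have h1 : ⇑hm.stieltjesFunction = Function.rightLim g := funext (hm.stieltjesFunction_eq)
  rw [show hm.stieltjesFunction a = Function.rightLim g a from hm.stieltjesFunction_eq a,
    h1, aux_leftLim_rightLim hg, jumpG]

lemma aux_countable {g : ℝ → ℝ} (hg : IsDerivator g) : (Dg g).Countable := by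
  apply (hg.1.countable_not_continuousAt).mono
  intro a ha
  simp only [mem_setOf_eq] at ha ⊢
  intro hc
  have : Function.rightLim g a = g a :=
    rightLim_eq_of_tendsto (hc.tendsto.mono_left nhdsWithin_le_nhds)
  rw [Dg, mem_setOf_eq, jumpG, this] at ha
  linarith

lemma aux_summable {g : ℝ → ℝ} (hg : IsDerivator g) {T : ℝ} {β : ℝ → ℂ}
    (hβ : MeasureTheory.IntegrableOn β (Set.Ico 0 T) (stieltjesMeasure g)) :
    Summable (fun s : (Set.Ico 0 T ∩ Dg g : Set ℝ) =>
      ‖β s.1‖ * jumpG g s.1) := by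
  set μ := stieltjesMeasure g
  have hScount : (Set.Ico 0 T ∩ Dg g : Set ℝ).Countable :=
    (aux_countable hg).mono inter_subset_right
  have := hScount.to_subtype
  have key : ∑' s : (Set.Ico 0 T ∩ Dg g : Set ℝ),
      ENNReal.ofReal (‖β s.1‖ * jumpG g s.1) ≠ ⊤ := by
    have heq : ∀ s : (Set.Ico 0 T ∩ Dg g : Set ℝ),
        ENNReal.ofReal (‖β s.1‖ * jumpG g s.1)
          = ∫⁻ x in {(s : ℝ)}, ‖β x‖₊ ∂μ := by
      intro s
      rw [lintegral_singleton, aux_measure_singleton hg,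
        ENNReal.ofReal_mul (norm_nonneg _)]
      congr 1
      rw [← coe_nnnorm, ENNReal.ofReal_coe_nnreal]
    rw [tsum_congr heq, ← lintegral_iUnion (fun _ => measurableSet_singleton _)
      (fun i j hij => by
          simp only [onFun, Set.disjoint_singleton]
          exact fun h => hij (Subtype.val_injective h)) ]
    · rw [Set.iUnion_of_singleton_coe]
      exact ((lintegral_mono_set inter_subset_left).trans_lt hβ.2).ne
  have := ENNReal.summable_toReal key
  convert this using 2 with s
  rw [ENNReal.toReal_ofReal]
  exact mul_nonneg (norm_nonneg _) (le_of_lt s.2.2)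

/-- the set `A = {s ∈ [0,T) ∩ D_g : |1 + β(s)Δ⁺g(s)| < 1/2}` is finite;
consequently, for any `f ∈ L¹_g`, if `1 + β(s)Δ⁺g(s) ≠ 0` on `[0,T) ∩ D_g` then
`∑_{s ∈ [0,T) ∩ D_g} |f(s)|Δ⁺g(s)/|1 + β(s)Δ⁺g(s)| < ∞`. -/
theorem stmt15 (g : ℝ → ℝ) (hg : IsDerivator g) (T : ℝ) (hT : 0 < T) (β : ℝ → ℂ)
    (hβ : MeasureTheory.IntegrableOn β (Set.Ico 0 T) (stieltjesMeasure g)) :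
    {s | s ∈ Set.Ico 0 T ∩ Dg g ∧ ‖1 + β s * (jumpG g s : ℂ)‖ < 1 / 2}.Finite ∧
    ∀ f : ℝ → ℂ, MeasureTheory.IntegrableOn f (Set.Ico 0 T) (stieltjesMeasure g) →
      (∀ s ∈ Set.Ico 0 T ∩ Dg g, 1 + β s * (jumpG g s : ℂ) ≠ 0) →
      Summable (fun s : (Set.Ico 0 T ∩ Dg g : Set ℝ) =>
        ‖f s.1‖ * jumpG g s.1 / ‖1 + β s.1 * (jumpG g s.1 : ℂ)‖) := by
  set S : Set ℝ := Set.Ico 0 T ∩ Dg g with hS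
  set u : S → ℝ := fun s => ‖β s.1‖ * jumpG g s.1 with hu
  have husum : Summable u := aux_summable hg hβ
  -- key pointwise estimate on A
  have hkey : ∀ s : S, ‖1 + β s.1 * (jumpG g s.1 : ℂ)‖ < 1 / 2 → 1 / 2 ≤ u s := by
    intro s habs
    have hjpos : 0 < jumpG g s.1 := s.2.2
    have h1 : ‖β s.1 * (jumpG g s.1 : ℂ)‖ = u s := by
      rw [norm_mul, Complex.norm_real, Real.norm_eq_abs, abs_of_pos hjpos]
    have h2 : (1 : ℝ) - ‖1 + β s.1 * (jumpG g s.1 : ℂ)‖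
        ≤ ‖β s.1 * (jumpG g s.1 : ℂ)‖ := by
      have h3 := norm_sub_norm_le (1:ℂ) (1 + β s.1 * (jumpG g s.1 : ℂ))
      have h4 : (1:ℂ) - (1 + β s.1 * (jumpG g s.1 : ℂ)) = -(β s.1 * (jumpG g s.1 : ℂ)) := by
        ring
      rw [h4, norm_neg, norm_one] at h3
      linarith
    rw [h1] at h2
    linarith
  have hA'fin : {s : S | ‖1 + β s.1 * (jumpG g s.1 : ℂ)‖ < 1 / 2}.Finite := by
    have h := husum.tendsto_cofinite_zero (Iio_mem_nhds (show (0:ℝ) < 1/2 by norm_num))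
    rw [Filter.mem_map, mem_cofinite] at h
    apply h.subset
    intro s hs
    simp only [mem_compl_iff, mem_preimage, mem_Iio, not_lt]
    exact hkey s hs
  constructor
  · have : {s | s ∈ S ∧ ‖1 + β s * (jumpG g s : ℂ)‖ < 1 / 2}
        ⊆ Subtype.val '' {s : S | ‖1 + β s.1 * (jumpG g s.1 : ℂ)‖ < 1 / 2} := by
      rintro x ⟨hxS, hx⟩
      exact ⟨⟨x, hxS⟩, hx, rfl⟩
    exact (hA'fin.image Subtype.val).subset this
  · intro f hf hne
    set t : S → ℝ := fun s =>
      ‖f s.1‖ * jumpG g s.1 / ‖1 + β s.1 * (jumpG g s.1 : ℂ)‖ with ht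
    have hfsum : Summable (fun s : S => 2 * (‖f s.1‖ * jumpG g s.1)) :=
      (aux_summable hg hf).mul_left 2
    rw [← hA'fin.summable_compl_iff]
    apply Summable.of_nonneg_of_le
    · intro s
      exact div_nonneg (mul_nonneg (norm_nonneg _) (le_of_lt s.1.2.2))
        (norm_nonneg _)
    · intro s
      have hs : ¬ ‖1 + β s.1.1 * (jumpG g s.1.1 : ℂ)‖ < 1 / 2 := s.2
      push_neg at hs
      show t s.1 ≤ 2 * (‖f s.1.1‖ * jumpG g s.1.1)
      rw [ht, div_le_iff₀ (by
        rcases lt_of_lt_of_le (by norm_num : (0:ℝ) < 1/2) hs with h; exact h)]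
      have hnn : 0 ≤ ‖f s.1.1‖ * jumpG g s.1.1 :=
        mul_nonneg (norm_nonneg _) (le_of_lt s.1.2.2)
      calc ‖f s.1.1‖ * jumpG g s.1.1
          = 2 * (‖f s.1.1‖ * jumpG g s.1.1) * (1/2) := by ring
        _ ≤ 2 * (‖f s.1.1‖ * jumpG g s.1.1)
              * ‖1 + β s.1.1 * (jumpG g s.1.1 : ℂ)‖ := by
            apply mul_le_mul_of_nonneg_left hs (by linarith)
    · exact hfsum.subtype _
end
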